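/- Bi-Lipschitz stability of the k-plane transform in the generalized Fourier metric: for positive Radon measures μ, ν on ℝ^d with finite second moments and positive total mass, (1/2) d̃_2(μ,ν) ≤ D(Pμ, Pν) ≤ d̃_2(μ,ν), where D(Pμ,Pν) := sup_{α ∈ G_{k,d}} d̃_2(P_α μ, P_α ν). -/

import Mathlib

open MeasureTheory

noncomputable section

/-- The Fourier transform of a measure on a real inner product space. -/
def fourierT {F : Type*} [NormedAddCommGroup F] [InnerProductSpace ℝ F] [MeasurableSpace F]
    (μ : Measure F) (ξ : F) : ℂ :=
  ∫ x, Complex.exp (-Complex.I * ((inner ℝ x ξ : ℝ) : ℂ)) ∂μ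

/-- The Fourier metric `d₂(μ,ν) = sup_{ξ ≠ 0} |μ̂(ξ) - ν̂(ξ)| / |ξ|²`. -/
def fourierDist2 {F : Type*} [NormedAddCommGroup F] [InnerProductSpace ℝ F] [MeasurableSpace F]
    (μ ν : Measure F) : ℝ :=
  ⨆ ξ : {ξ : F // ξ ≠ 0}, ‖fourierT μ ξ - fourierT ν ξ‖ / ‖(ξ : F)‖ ^ 2

/-- The barycenter `m⃗_μ = (1/M_μ) ∫ x dμ(x)`. -/
def bary {F : Type*} [NormedAddCommGroup F] [NormedSpace ℝ F] [MeasurableSpace F]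
    (μ : Measure F) : F :=
  ((μ Set.univ).toReal)⁻¹ • ∫ x, x ∂μ

/-- The centered normalization `μ̄₀ = (1/M_μ) T_{m⃗_μ} μ`. -/
def centerNorm {F : Type*} [NormedAddCommGroup F] [NormedSpace ℝ F] [MeasurableSpace F]
    (μ : Measure F) : Measure F :=
  (μ Set.univ)⁻¹ • μ.map (fun x => x - bary μ)

/-- The generalized Fourier metric
`d̃₂(μ,ν) = d₂(μ̄₀, ν̄₀) + |m⃗_μ - m⃗_ν| + |M_μ - M_ν|`. -/
def fourierDistTilde2 {F : Type*} [NormedAddCommGroup F] [InnerProductSpace ℝ F]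
    [MeasurableSpace F] (μ ν : Measure F) : ℝ :=
  fourierDist2 (centerNorm μ) (centerNorm ν) + ‖bary μ - bary ν‖
    + |(μ Set.univ).toReal - (ν Set.univ).toReal|

/-!
Projecting onto `α^⊥` preserves mass, projects barycenters and commutes with centered
normalization, and the Fourier transform of the projected measure at `ξ ∈ α^⊥` is the Fourier
transform of the original one at `ξ`. So every term of `d̃₂` can only decrease under projection,
which is the upper bound. Conversely, since `k < d` every vector lies in `α^⊥` for some `k`-plane
`α`; applied to a frequency `ξ` this gives `d₂(μ̄₀, ν̄₀) + |M_μ - M_ν| ≤ D`, and applied to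
`m⃗_μ - m⃗_ν` it gives `|m⃗_μ - m⃗_ν| + |M_μ - M_ν| ≤ D`; adding the two yields `d̃₂ ≤ 2 D`.
All suprema are finite because `|ρ̂(ξ) - 1| ≤ 2 |ξ|² ∫ |x|² dρ` for a centered probability
measure `ρ` with finite second moment.
-/

open Module Complex

lemma norm_exp_I_mul_ofReal_sub_one_sub_le (θ : ℝ) :
    ‖exp (I * θ) - 1 - I * θ‖ ≤ 2 * θ ^ 2 := by
  have hIθ : ‖I * θ‖ = |θ| := by simp
  rcases le_or_gt |θ| 1 with hθ | hθ
  · calc ‖exp (I * θ) - 1 - I * θ‖ ≤ ‖I * θ‖ ^ 2 :=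
          norm_exp_sub_one_sub_id_le (hIθ ▸ hθ)
      _ = θ ^ 2 := by rw [hIθ, sq_abs]
      _ ≤ 2 * θ ^ 2 := by nlinarith [sq_nonneg θ]
  · calc ‖exp (I * θ) - 1 - I * θ‖ ≤ ‖exp (I * θ) - 1‖ + ‖I * θ‖ := norm_sub_le _ _
      _ ≤ |θ| + |θ| := by rw [hIθ]; exact add_le_add Real.norm_exp_I_mul_ofReal_sub_one_le le_rfl
      _ ≤ 2 * θ ^ 2 := by nlinarith [sq_abs θ]

lemma MeasureTheory.Measure.map_apply_univ {α β : Type*} [MeasurableSpace α] [MeasurableSpace β]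
    {μ : Measure α} {f : α → β} (hf : AEMeasurable f μ) : μ.map f Set.univ = μ Set.univ := by
  rw [Measure.map_apply_of_aemeasurable hf .univ, Set.preimage_univ]

lemma integrable_id_of_integrable_norm_sq {E : Type*} [NormedAddCommGroup E] [MeasurableSpace E]
    [BorelSpace E] [SecondCountableTopology E] {ρ : Measure E} [IsFiniteMeasure ρ]
    (h2 : Integrable (fun x => ‖x‖ ^ 2) ρ) : Integrable (fun x => x) ρ :=
  ((memLp_two_iff_integrable_sq_norm aestronglyMeasurable_id).2 h2).integrable one_le_two

section Centering

variable {E : Type*} [NormedAddCommGroup E] [NormedSpace ℝ E] [MeasurableSpace E]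

lemma toReal_measure_univ_smul_bary (μ : Measure E) [IsFiniteMeasure μ] :
    (μ Set.univ).toReal • bary μ = ∫ x, x ∂μ := by
  rcases eq_or_ne μ 0 with rfl | hμ
  · simp
  · exact smul_inv_smul₀
      (ENNReal.toReal_ne_zero.2 ⟨Measure.measure_univ_ne_zero.2 hμ, measure_ne_top μ _⟩) _

variable [BorelSpace E]

lemma isProbabilityMeasure_centerNorm {μ : Measure E} [IsFiniteMeasure μ]
    (hM : μ Set.univ ≠ 0) : IsProbabilityMeasure (centerNorm μ) := by
  constructor
  rw [centerNorm, Measure.smul_apply, Measure.map_apply_univ (by fun_prop), smul_eq_mul,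
    ENNReal.inv_mul_cancel hM (measure_ne_top μ _)]

lemma integrable_norm_sq_centerNorm [SecondCountableTopology E] {μ : Measure E} [IsFiniteMeasure μ]
    (hM : μ Set.univ ≠ 0) (h2 : Integrable (fun x => ‖x‖ ^ 2) μ) :
    Integrable (fun x => ‖x‖ ^ 2) (centerNorm μ) := by
  have hL2 : MemLp id 2 μ := (memLp_two_iff_integrable_sq_norm aestronglyMeasurable_id).2 h2
  refine Integrable.smul_measure ?_ (ENNReal.inv_ne_top.2 hM)
  rw [integrable_map_measure (by fun_prop) (by fun_prop)]
  exact (memLp_two_iff_integrable_sq_norm (by fun_prop)).1 (hL2.sub (memLp_const (bary μ)))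

variable [CompleteSpace E]

lemma integral_id_centerNorm [SecondCountableTopology E] {μ : Measure E} [IsFiniteMeasure μ]
    (hid : Integrable (fun x => x) μ) : ∫ x, x ∂(centerNorm μ) = 0 := by
  rw [centerNorm, integral_smul_measure,
    integral_map (by fun_prop) measurable_id'.aestronglyMeasurable,
    integral_sub hid (integrable_const _), integral_const, ← toReal_measure_univ_smul_bary,
    measureReal_def, sub_self, smul_zero]

variable {F : Type*} [NormedAddCommGroup F] [NormedSpace ℝ F] [MeasurableSpace F] [BorelSpace F]
  [SecondCountableTopology F] [CompleteSpace F]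

lemma bary_map {μ : Measure E} (L : E →L[ℝ] F) (hid : Integrable (fun x => x) μ) :
    bary (μ.map L) = L (bary μ) := by
  rw [bary, bary, Measure.map_apply_univ L.measurable.aemeasurable,
    integral_map L.measurable.aemeasurable measurable_id'.aestronglyMeasurable,
    L.integral_comp_comm hid, L.map_smul]

lemma centerNorm_map {μ : Measure E} (L : E →L[ℝ] F) (hid : Integrable (fun x => x) μ) :
    centerNorm (μ.map L) = (centerNorm μ).map L := by
  rw [centerNorm, centerNorm, Measure.map_apply_univ L.measurable.aemeasurable, bary_map L hid,
    Measure.map_smul, Measure.map_map (by fun_prop) L.measurable,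
    Measure.map_map L.measurable (by fun_prop)]
  congr 2
  ext x
  simp

end Centering

section Fourier

variable {F : Type*} [NormedAddCommGroup F] [InnerProductSpace ℝ F] [MeasurableSpace F]

def fourierQuotient (ρ σ : Measure F) (ξ : F) : ℝ :=
  ‖fourierT ρ ξ - fourierT σ ξ‖ / ‖ξ‖ ^ 2

lemma fourierDist2_nonneg (ρ σ : Measure F) : 0 ≤ fourierDist2 ρ σ :=
  Real.iSup_nonneg fun _ => by positivity

lemma fourierDistTilde2_nonneg (μ ν : Measure F) : 0 ≤ fourierDistTilde2 μ ν := by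
  have := fourierDist2_nonneg (centerNorm μ) (centerNorm ν)
  rw [fourierDistTilde2]
  positivity

variable [BorelSpace F] [SecondCountableTopology F] [CompleteSpace F]

lemma norm_fourierT_sub_one_le {ρ : Measure F} [IsProbabilityMeasure ρ]
    (h2 : Integrable (fun x => ‖x‖ ^ 2) ρ) (hb : ∫ x, x ∂ρ = 0) (ξ : F) :
    ‖fourierT ρ ξ - 1‖ ≤ 2 * (∫ x, ‖x‖ ^ 2 ∂ρ) * ‖ξ‖ ^ 2 := by
  have hc : Continuous fun x : F => exp (-I * ((inner ℝ x ξ : ℝ) : ℂ)) := by fun_prop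
  have hexp : Integrable (fun x : F => exp (-I * ((inner ℝ x ξ : ℝ) : ℂ))) ρ :=
    .of_bound hc.aestronglyMeasurable 1 (.of_forall fun x => by
      rw [norm_exp]; simp)
  have hinner : Integrable (fun x : F => I * ((inner ℝ x ξ : ℝ) : ℂ)) ρ :=
    ((integrable_id_of_integrable_norm_sq h2).inner_const ξ).ofReal.const_mul I
  have hmean : ∫ x, I * ((inner ℝ x ξ : ℝ) : ℂ) ∂ρ = 0 := by
    have h : ∫ x, inner ℝ x ξ ∂ρ = 0 := by
      simpa [real_inner_comm, hb] using integral_inner (integrable_id_of_integrable_norm_sq h2) ξ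
    rw [integral_const_mul, integral_complex_ofReal, h, ofReal_zero, mul_zero]
  have hrepr : fourierT ρ ξ - 1 =
      ∫ x, (exp (-I * ((inner ℝ x ξ : ℝ) : ℂ)) - 1 + I * ((inner ℝ x ξ : ℝ) : ℂ)) ∂ρ := by
    rw [integral_add (f := fun x => exp (-I * ((inner ℝ x ξ : ℝ) : ℂ)) - 1)
      (hexp.sub (integrable_const 1)) hinner, hmean, add_zero,
      integral_sub hexp (integrable_const 1)]
    simp [fourierT]
  rw [hrepr, mul_right_comm, ← integral_const_mul]
  refine norm_integral_le_of_norm_le (h2.const_mul _) (.of_forall fun x => ?_)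
  calc _ = ‖exp (I * ((-inner ℝ x ξ : ℝ) : ℂ)) - 1 - I * ((-inner ℝ x ξ : ℝ) : ℂ)‖ := by
          congr 1; push_cast; ring_nf
    _ ≤ 2 * (inner ℝ x ξ) ^ 2 := by
          simpa using norm_exp_I_mul_ofReal_sub_one_sub_le (-inner ℝ x ξ)
    _ = 2 * |inner ℝ x ξ| ^ 2 := by rw [sq_abs]
    _ ≤ 2 * (‖x‖ * ‖ξ‖) ^ 2 := by gcongr; exact abs_real_inner_le_norm x ξ
    _ = 2 * ‖ξ‖ ^ 2 * ‖x‖ ^ 2 := by ring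

lemma bddAbove_fourierQuotient_centerNorm {μ ν : Measure F} [IsFiniteMeasure μ]
    [IsFiniteMeasure ν] (hMμ : μ Set.univ ≠ 0) (hMν : ν Set.univ ≠ 0)
    (h2μ : Integrable (fun x => ‖x‖ ^ 2) μ) (h2ν : Integrable (fun x => ‖x‖ ^ 2) ν) :
    BddAbove (Set.range fun ξ : {ξ : F // ξ ≠ 0} =>
      fourierQuotient (centerNorm μ) (centerNorm ν) ξ) := by
  have := isProbabilityMeasure_centerNorm hMμ
  have := isProbabilityMeasure_centerNorm hMν
  have hμ := norm_fourierT_sub_one_le (integrable_norm_sq_centerNorm hMμ h2μ)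
    (integral_id_centerNorm (integrable_id_of_integrable_norm_sq h2μ))
  have hν := norm_fourierT_sub_one_le (integrable_norm_sq_centerNorm hMν h2ν)
    (integral_id_centerNorm (integrable_id_of_integrable_norm_sq h2ν))
  refine ⟨2 * (∫ x, ‖x‖ ^ 2 ∂centerNorm μ) + 2 * ∫ x, ‖x‖ ^ 2 ∂centerNorm ν, ?_⟩
  rintro _ ⟨⟨ξ, hξ⟩, rfl⟩
  dsimp only [fourierQuotient]
  rw [div_le_iff₀ (by positivity)]
  calc ‖fourierT (centerNorm μ) ξ - fourierT (centerNorm ν) ξ‖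
      ≤ ‖fourierT (centerNorm μ) ξ - 1‖ + ‖fourierT (centerNorm ν) ξ - 1‖ := by
        rw [norm_sub_rev (fourierT (centerNorm ν) ξ)]; exact norm_sub_le_norm_sub_add_norm_sub _ _ _
    _ ≤ _ := by linarith [hμ ξ, hν ξ]

end Fourier

section Projection

variable {F : Type*} [NormedAddCommGroup F] [InnerProductSpace ℝ F] [MeasurableSpace F]
  [BorelSpace F] (K : Submodule ℝ F) [K.HasOrthogonalProjection]

lemma fourierT_map_orthogonalProjectionOnto (ρ : Measure F) (ξ : K) :
    fourierT (ρ.map K.orthogonalProjectionOnto) ξ = fourierT ρ ξ := by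
  rw [fourierT, fourierT, integral_map K.orthogonalProjectionOnto.measurable.aemeasurable
    (by fun_prop : Continuous fun y : K => exp (-I * ((inner ℝ y ξ : ℝ) : ℂ))).aestronglyMeasurable]
  simp only [Submodule.inner_orthogonalProjectionOnto_eq_of_mem_right]

lemma fourierQuotient_map_orthogonalProjectionOnto (ρ σ : Measure F) (ξ : K) :
    fourierQuotient (ρ.map K.orthogonalProjectionOnto) (σ.map K.orthogonalProjectionOnto) ξ =
      fourierQuotient ρ σ ξ := by
  simp only [fourierQuotient, fourierT_map_orthogonalProjectionOnto, Submodule.coe_norm]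

variable {ρ σ : Measure F}

lemma fourierDist2_map_orthogonalProjectionOnto_le
    (hbdd : BddAbove (Set.range fun ξ : {ξ : F // ξ ≠ 0} => fourierQuotient ρ σ ξ)) :
    fourierDist2 (ρ.map K.orthogonalProjectionOnto) (σ.map K.orthogonalProjectionOnto) ≤
      fourierDist2 ρ σ :=
  Real.iSup_le (fun ξ => (fourierQuotient_map_orthogonalProjectionOnto K ρ σ ξ).trans_le
    (le_ciSup hbdd ⟨ξ, by simpa using ξ.2⟩)) (fourierDist2_nonneg ρ σ)

lemma fourierQuotient_le_fourierDist2_map_orthogonalProjectionOnto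
    (hbdd : BddAbove (Set.range fun ξ : {ξ : F // ξ ≠ 0} => fourierQuotient ρ σ ξ)) {ξ : F}
    (hξK : ξ ∈ K) (hξ : ξ ≠ 0) :
    fourierQuotient ρ σ ξ ≤
      fourierDist2 (ρ.map K.orthogonalProjectionOnto) (σ.map K.orthogonalProjectionOnto) := by
  obtain ⟨B, hB⟩ := hbdd
  have hbddK : BddAbove (Set.range fun η : {η : K // η ≠ 0} =>
      fourierQuotient (ρ.map K.orthogonalProjectionOnto) (σ.map K.orthogonalProjectionOnto) η) := by
    refine ⟨B, ?_⟩
    rintro _ ⟨η, rfl⟩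
    exact (fourierQuotient_map_orthogonalProjectionOnto K ρ σ η).trans_le
      (hB ⟨⟨η, by simpa using η.2⟩, rfl⟩)
  rw [← fourierQuotient_map_orthogonalProjectionOnto K ρ σ ⟨ξ, hξK⟩]
  exact le_ciSup hbddK ⟨⟨ξ, hξK⟩, by simpa using hξ⟩

end Projection

lemma Submodule.exists_le_finrank_eq {R V : Type*} [DivisionRing R] [AddCommGroup V]
    [Module R V] (W : Submodule R V) [FiniteDimensional R W] {k : ℕ} (hk : k ≤ finrank R W) :
    ∃ U ≤ W, finrank R U = k := by
  let b := Module.finBasis R W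
  refine ⟨span R (Set.range (W.subtype ∘ b ∘ Fin.castLE hk)), ?_, ?_⟩
  · rw [Submodule.span_le]
    rintro _ ⟨i, rfl⟩
    exact (b _).2
  · rw [finrank_span_eq_card ((b.linearIndependent.comp _ (Fin.castLE_injective hk)).map'
      W.subtype W.ker_subtype)]
    simp

lemma exists_finrank_eq_mem_orthogonal {V : Type*} [NormedAddCommGroup V] [InnerProductSpace ℝ V]
    [FiniteDimensional ℝ V] {k : ℕ} (hk : k < finrank ℝ V) (v : V) :
    ∃ W : Submodule ℝ V, finrank ℝ W = k ∧ v ∈ Wᗮ := by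
  have hline : finrank ℝ (ℝ ∙ v) ≤ 1 := by simpa using finrank_span_le_card ({v} : Set V)
  have hperp : k ≤ finrank ℝ (ℝ ∙ v)ᗮ := by
    have := (ℝ ∙ v).finrank_add_finrank_orthogonal
    omega
  obtain ⟨W, hW, hWk⟩ := (ℝ ∙ v)ᗮ.exists_le_finrank_eq hperp
  exact ⟨W, hWk, Submodule.orthogonal_le hW
    ((ℝ ∙ v).le_orthogonal_orthogonal (Submodule.mem_span_singleton_self v))⟩

section ProjectedDistance

variable {F : Type*} [NormedAddCommGroup F] [InnerProductSpace ℝ F] [MeasurableSpace F]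
  [BorelSpace F] [SecondCountableTopology F] [CompleteSpace F] {μ ν : Measure F}

variable (K : Submodule ℝ F) [CompleteSpace K]

lemma fourierDistTilde2_map_orthogonalProjectionOnto (hidμ : Integrable (fun x => x) μ)
    (hidν : Integrable (fun x => x) ν) :
    fourierDistTilde2 (μ.map K.orthogonalProjectionOnto) (ν.map K.orthogonalProjectionOnto) =
      fourierDist2 ((centerNorm μ).map K.orthogonalProjectionOnto)
          ((centerNorm ν).map K.orthogonalProjectionOnto) +
        ‖K.orthogonalProjectionOnto (bary μ - bary ν)‖ +
        |(μ Set.univ).toReal - (ν Set.univ).toReal| := by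
  have hP := K.orthogonalProjectionOnto.measurable
  rw [fourierDistTilde2, centerNorm_map _ hidμ, centerNorm_map _ hidν, bary_map _ hidμ,
    bary_map _ hidν, map_sub, Measure.map_apply_univ hP.aemeasurable,
    Measure.map_apply_univ hP.aemeasurable]

lemma fourierDistTilde2_map_orthogonalProjectionOnto_le [IsFiniteMeasure μ] [IsFiniteMeasure ν]
    (hMμ : μ Set.univ ≠ 0) (hMν : ν Set.univ ≠ 0)
    (h2μ : Integrable (fun x => ‖x‖ ^ 2) μ) (h2ν : Integrable (fun x => ‖x‖ ^ 2) ν) :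
    fourierDistTilde2 (μ.map K.orthogonalProjectionOnto) (ν.map K.orthogonalProjectionOnto) ≤
      fourierDistTilde2 μ ν := by
  rw [fourierDistTilde2_map_orthogonalProjectionOnto K (integrable_id_of_integrable_norm_sq h2μ)
    (integrable_id_of_integrable_norm_sq h2ν), fourierDistTilde2]
  gcongr ?_ + ?_ + _
  · exact fourierDist2_map_orthogonalProjectionOnto_le K
      (bddAbove_fourierQuotient_centerNorm hMμ hMν h2μ h2ν)
  · exact K.norm_orthogonalProjectionOnto_apply_le _

lemma fourierQuotient_centerNorm_add_le_fourierDistTilde2_map [IsFiniteMeasure μ]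
    [IsFiniteMeasure ν] (hMμ : μ Set.univ ≠ 0) (hMν : ν Set.univ ≠ 0)
    (h2μ : Integrable (fun x => ‖x‖ ^ 2) μ) (h2ν : Integrable (fun x => ‖x‖ ^ 2) ν)
    {ξ : F} (hξK : ξ ∈ K) (hξ : ξ ≠ 0) :
    fourierQuotient (centerNorm μ) (centerNorm ν) ξ + |(μ Set.univ).toReal - (ν Set.univ).toReal| ≤
      fourierDistTilde2 (μ.map K.orthogonalProjectionOnto) (ν.map K.orthogonalProjectionOnto) := by
  rw [fourierDistTilde2_map_orthogonalProjectionOnto K (integrable_id_of_integrable_norm_sq h2μ)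
    (integrable_id_of_integrable_norm_sq h2ν)]
  have := fourierQuotient_le_fourierDist2_map_orthogonalProjectionOnto K
    (bddAbove_fourierQuotient_centerNorm hMμ hMν h2μ h2ν) hξK hξ
  linarith [norm_nonneg (K.orthogonalProjectionOnto (bary μ - bary ν))]

lemma norm_bary_sub_add_le_fourierDistTilde2_map (hidμ : Integrable (fun x => x) μ)
    (hidν : Integrable (fun x => x) ν) (hK : bary μ - bary ν ∈ K) :
    ‖bary μ - bary ν‖ + |(μ Set.univ).toReal - (ν Set.univ).toReal| ≤
      fourierDistTilde2 (μ.map K.orthogonalProjectionOnto) (ν.map K.orthogonalProjectionOnto) := by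
  rw [fourierDistTilde2_map_orthogonalProjectionOnto K hidμ hidν,
    K.norm_orthogonalProjectionOnto_apply hK]
  linarith [fourierDist2_nonneg ((centerNorm μ).map K.orthogonalProjectionOnto)
    ((centerNorm ν).map K.orthogonalProjectionOnto)]

end ProjectedDistance

section KPlane

variable {F : Type*} [NormedAddCommGroup F] [InnerProductSpace ℝ F] [FiniteDimensional ℝ F]
  [MeasurableSpace F] [BorelSpace F] {μ ν : Measure F} [IsFiniteMeasure μ] [IsFiniteMeasure ν]

theorem iSup_fourierDistTilde2_map_orthogonalProjectionOnto_le (hMμ : μ Set.univ ≠ 0)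
    (hMν : ν Set.univ ≠ 0) (h2μ : Integrable (fun x => ‖x‖ ^ 2) μ)
    (h2ν : Integrable (fun x => ‖x‖ ^ 2) ν) (k : ℕ) :
    ⨆ α : {α : Submodule ℝ F // finrank ℝ α = k},
        fourierDistTilde2 (μ.map (α : Submodule ℝ F)ᗮ.orthogonalProjectionOnto)
          (ν.map (α : Submodule ℝ F)ᗮ.orthogonalProjectionOnto) ≤
      fourierDistTilde2 μ ν :=
  Real.iSup_le (fun _ => fourierDistTilde2_map_orthogonalProjectionOnto_le _ hMμ hMν h2μ h2ν)
    (fourierDistTilde2_nonneg μ ν)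

theorem fourierDistTilde2_le_two_mul_iSup_map_orthogonalProjectionOnto (hMμ : μ Set.univ ≠ 0)
    (hMν : ν Set.univ ≠ 0) (h2μ : Integrable (fun x => ‖x‖ ^ 2) μ)
    (h2ν : Integrable (fun x => ‖x‖ ^ 2) ν) {k : ℕ} (hk : k < finrank ℝ F) :
    fourierDistTilde2 μ ν ≤
      2 * ⨆ α : {α : Submodule ℝ F // finrank ℝ α = k},
        fourierDistTilde2 (μ.map (α : Submodule ℝ F)ᗮ.orthogonalProjectionOnto)
          (ν.map (α : Submodule ℝ F)ᗮ.orthogonalProjectionOnto) := by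
  set D := fun α : {α : Submodule ℝ F // finrank ℝ α = k} =>
    fourierDistTilde2 (μ.map (α : Submodule ℝ F)ᗮ.orthogonalProjectionOnto)
      (ν.map (α : Submodule ℝ F)ᗮ.orthogonalProjectionOnto)
  have hD : BddAbove (Set.range D) := ⟨_, Set.forall_mem_range.2 fun α =>
    fourierDistTilde2_map_orthogonalProjectionOnto_le _ hMμ hMν h2μ h2ν⟩
  have hplane (v : F) : ∃ α : {α : Submodule ℝ F // finrank ℝ α = k}, v ∈ (α : Submodule ℝ F)ᗮ :=
    let ⟨W, hW, hv⟩ := exists_finrank_eq_mem_orthogonal hk v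
    ⟨⟨W, hW⟩, hv⟩
  have hbary : ‖bary μ - bary ν‖ + |(μ Set.univ).toReal - (ν Set.univ).toReal| ≤ ⨆ α, D α := by
    obtain ⟨α, hα⟩ := hplane (bary μ - bary ν)
    exact (norm_bary_sub_add_le_fourierDistTilde2_map _ (integrable_id_of_integrable_norm_sq h2μ)
      (integrable_id_of_integrable_norm_sq h2ν) hα).trans (le_ciSup hD α)
  have hfourier : fourierDist2 (centerNorm μ) (centerNorm ν) ≤
      (⨆ α, D α) - |(μ Set.univ).toReal - (ν Set.univ).toReal| := by
    refine Real.iSup_le (fun ξ => ?_) (by linarith [norm_nonneg (bary μ - bary ν)])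
    obtain ⟨α, hα⟩ := hplane ξ
    rw [le_sub_iff_add_le]
    exact (fourierQuotient_centerNorm_add_le_fourierDistTilde2_map _ hMμ hMν h2μ h2ν hα ξ.2).trans
      (le_ciSup hD α)
  rw [fourierDistTilde2]
  linarith [abs_nonneg ((μ Set.univ).toReal - (ν Set.univ).toReal)]

end KPlane

/-- Bi-Lipschitz stability of the `k`-plane transform in the generalized Fourier
metric: `(1/2) d̃₂(μ,ν) ≤ D(Pμ,Pν) ≤ d̃₂(μ,ν)`, where
`D(Pμ,Pν) = sup_α d̃₂(P_α μ, P_α ν)`. -/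
theorem kplane_biLipschitz_fourier (d k : ℕ) (hk : 1 ≤ k) (hkd : k ≤ d - 1)
    (μ ν : Measure (EuclideanSpace ℝ (Fin d)))
    [IsFiniteMeasure μ] [IsFiniteMeasure ν]
    (hMμ : 0 < μ Set.univ) (hMν : 0 < ν Set.univ)
    (h2μ : Integrable (fun x => ‖x‖ ^ 2) μ) (h2ν : Integrable (fun x => ‖x‖ ^ 2) ν) :
    (1 / 2 : ℝ) * fourierDistTilde2 μ ν ≤
        (⨆ α : {α : Submodule ℝ (EuclideanSpace ℝ (Fin d)) // Module.finrank ℝ α = k},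
          fourierDistTilde2
            (μ.map (fun x => Submodule.orthogonalProjectionOnto (α : Submodule ℝ (EuclideanSpace ℝ (Fin d)))ᗮ x))
            (ν.map (fun x => Submodule.orthogonalProjectionOnto (α : Submodule ℝ (EuclideanSpace ℝ (Fin d)))ᗮ x)))
    ∧ (⨆ α : {α : Submodule ℝ (EuclideanSpace ℝ (Fin d)) // Module.finrank ℝ α = k},
          fourierDistTilde2
            (μ.map (fun x => Submodule.orthogonalProjectionOnto (α : Submodule ℝ (EuclideanSpace ℝ (Fin d)))ᗮ x))
            (ν.map (fun x => Submodule.orthogonalProjectionOnto (α : Submodule ℝ (EuclideanSpace ℝ (Fin d)))ᗮ x)))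
        ≤ fourierDistTilde2 μ ν := by
  have hk' : k < finrank ℝ (EuclideanSpace ℝ (Fin d)) := by
    rw [finrank_euclideanSpace_fin]
    omega
  refine ⟨?_, iSup_fourierDistTilde2_map_orthogonalProjectionOnto_le hMμ.ne' hMν.ne' h2μ h2ν k⟩
  linarith [fourierDistTilde2_le_two_mul_iSup_map_orthogonalProjectionOnto hMμ.ne' hMν.ne'
    h2μ h2ν hk']
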